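/- Let M ∈ M_N(ℂ) be normal with eigenvalues z₁,…,z_N (with multiplicity), and let c₁,…,c_k ∈ ℂ. If there exists a partition J₁,…,J_k of {1,…,N} such that c_i ∈ conv{z_j : j ∈ J_i} for each i, then diag(c₁,…,c_k) is a compression of M, i.e., there exist orthonormal vectors w₁,…,w_k in ℂ^N with ⟨Mw_i,w_i⟩ = c_i and ⟨Mw_i,w_h⟩ = 0 for i ≠ h. -/
import Mathlib


open Matrix BigOperators Finset

noncomputable section

/-- Numerical range of a complex matrix. -/
def NumRange {n : ℕ} (M : Matrix (Fin n) (Fin n) ℂ) : Set ℂ :=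
  { c | ∃ u : Fin n → ℂ, star u ⬝ᵥ u = 1 ∧ star u ⬝ᵥ M.mulVec u = c }

/-- `C` is a rank-`k` compression of `M`: `C` represents `P_S M |_S` in some
orthonormal basis of a `k`-dimensional subspace `S`. -/
def IsCompression {N k : ℕ} (M : Matrix (Fin N) (Fin N) ℂ)
    (C : Matrix (Fin k) (Fin k) ℂ) : Prop :=
  ∃ f : Fin k → (Fin N → ℂ),
    (∀ i j, star (f i) ⬝ᵥ f j = if i = j then 1 else 0) ∧
    (∀ i j, C i j = star (f i) ⬝ᵥ M.mulVec (f j))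

/-- `diag(a,b)` is a compression of `M`. -/
def IsDiagCompression {N : ℕ} (M : Matrix (Fin N) (Fin N) ℂ) (a b : ℂ) : Prop :=
  ∃ u w : Fin N → ℂ,
    star u ⬝ᵥ u = 1 ∧ star w ⬝ᵥ w = 1 ∧ star u ⬝ᵥ w = 0 ∧
    star u ⬝ᵥ M.mulVec u = a ∧ star w ⬝ᵥ M.mulVec w = b ∧
    star u ⬝ᵥ M.mulVec w = 0 ∧ star w ⬝ᵥ M.mulVec u = 0

/-- The rank-`k` numerical range `Λ_k(M)`. -/
def rankNumRange {N : ℕ} (k : ℕ) (M : Matrix (Fin N) (Fin N) ℂ) : Set ℂ :=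
  { c | ∃ P : Matrix (Fin N) (Fin N) ℂ,
      P.IsHermitian ∧ P * P = P ∧ P.rank = k ∧ P * M * P = c • P }

/-- `M` has an orthonormal basis of eigenvectors with eigenvalue list `z`. -/
def HasONEigenbasis {N : ℕ} (M : Matrix (Fin N) (Fin N) ℂ) (z : Fin N → ℂ) : Prop :=
  ∃ f : Fin N → (Fin N → ℂ),
    (∀ i j, star (f i) ⬝ᵥ f j = if i = j then 1 else 0) ∧
    (∀ j, M.mulVec (f j) = z j • f j)

/-- 2D cross product of complex numbers viewed as plane vectors. -/
def cross2 (p q : ℂ) : ℝ := p.re * q.im - p.im * q.re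

lemma weights_of_mem_hull {N : ℕ} (z : Fin N → ℂ) (s : Finset (Fin N)) (c : ℂ)
    (hc : c ∈ convexHull ℝ (z '' ↑s)) :
    ∃ t : Fin N → ℝ, (∀ j, 0 ≤ t j) ∧ (∑ j ∈ s, t j = 1) ∧ (∑ j ∈ s, (t j : ℂ) * z j = c) := by
  rw [Set.image_eq_range, convexHull_range_eq_exists_affineCombination] at hc
  obtain ⟨F, w, hw0, hw1, hco⟩ := hc
  rw [Finset.affineCombination_eq_linear_combination _ _ _ hw1] at hco
  refine ⟨fun j => ∑ i ∈ F, if (i : Fin N) = j then w i else 0, ?_, ?_, ?_⟩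
  · intro j
    exact Finset.sum_nonneg fun i hi => by split <;> [exact hw0 i hi; rfl]
  · rw [Finset.sum_comm]
    rw [← hw1]
    refine Finset.sum_congr rfl fun i hi => ?_
    rw [Finset.sum_ite_eq s (i : Fin N) (fun _ => w i), if_pos (Finset.mem_coe.mp i.2)]
  · push_cast
    simp only [Finset.sum_mul]
    rw [Finset.sum_comm, ← hco]
    refine Finset.sum_congr rfl fun i hi => ?_
    have : ∀ j, (if (i : Fin N) = j then (w i : ℂ) else 0) * z j
        = if (i : Fin N) = j then (w i : ℂ) * z j else 0 := by
      intro j; split <;> simp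
    simp only [apply_ite Complex.ofReal, Complex.ofReal_zero, this]
    rw [Finset.sum_ite_eq s (i : Fin N), if_pos (Finset.mem_coe.mp i.2)]
    simp

lemma dot_expand {N : ℕ} (f : Fin N → Fin N → ℂ) (s t : Finset (Fin N)) (α β : Fin N → ℂ) :
    star (∑ a ∈ s, α a • f a) ⬝ᵥ (∑ b ∈ t, β b • f b)
      = ∑ a ∈ s, ∑ b ∈ t, (starRingEnd ℂ) (α a) * β b * (star (f a) ⬝ᵥ f b) := by
  simp only [dotProduct, Finset.sum_apply, Pi.star_apply, Pi.smul_apply, smul_eq_mul,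
    star_sum, star_smul, Finset.sum_mul, Finset.mul_sum]
  calc (∑ x : Fin N, ∑ b ∈ t, ∑ a ∈ s, star (α a * f a x) * (β b * f b x))
      = ∑ b ∈ t, ∑ x : Fin N, ∑ a ∈ s, star (α a * f a x) * (β b * f b x) :=
        Finset.sum_comm
    _ = ∑ b ∈ t, ∑ a ∈ s, ∑ x : Fin N, star (α a * f a x) * (β b * f b x) :=
        Finset.sum_congr rfl fun _ _ => Finset.sum_comm
    _ = ∑ a ∈ s, ∑ b ∈ t, ∑ x : Fin N, star (α a * f a x) * (β b * f b x) :=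
        Finset.sum_comm
    _ = ∑ a ∈ s, ∑ b ∈ t, ∑ x : Fin N, (starRingEnd ℂ) (α a) * β b * (star (f a) x * f b x) := by
        refine Finset.sum_congr rfl fun a _ => Finset.sum_congr rfl fun b _ =>
          Finset.sum_congr rfl fun x _ => ?_
        simp only [star_mul', Pi.star_apply, starRingEnd_apply]
        ring
    _ = _ := by simp [Finset.mul_sum]

theorem stmt_3 {N k : ℕ} (M : Matrix (Fin N) (Fin N) ℂ)
    (hM : M * Mᴴ = Mᴴ * M) (z : Fin N → ℂ) (hz : HasONEigenbasis M z)
    (c : Fin k → ℂ) (J : Fin k → Finset (Fin N))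
    (hdisj : ∀ i h : Fin k, i ≠ h → Disjoint (J i) (J h))
    (hcover : ∀ n : Fin N, ∃ i, n ∈ J i)
    (hc : ∀ i : Fin k, c i ∈ convexHull ℝ (z '' ↑(J i))) :
    ∃ w : Fin k → (Fin N → ℂ),
      (∀ i j, star (w i) ⬝ᵥ w j = if i = j then 1 else 0) ∧
      (∀ i, star (w i) ⬝ᵥ M.mulVec (w i) = c i) ∧
      (∀ i h, i ≠ h → star (w h) ⬝ᵥ M.mulVec (w i) = 0) := by
  obtain ⟨f, hf_on, hf_eig⟩ := hz
  choose T hT0 hT1 hTc using fun i => weights_of_mem_hull z (J i) (c i) (hc i)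
  set α : Fin k → Fin N → ℂ := fun i j => ((Real.sqrt (T i j) : ℝ) : ℂ) with hα
  have hαsq : ∀ i j, α i j * α i j = ((T i j : ℝ) : ℂ) := by
    intro i j
    rw [hα]
    rw [← Complex.ofReal_mul, Real.mul_self_sqrt (hT0 i j)]
  have hconj : ∀ i j, (starRingEnd ℂ) (α i j) = α i j := fun i j => Complex.conj_ofReal _
  have hMw : ∀ i, M.mulVec (∑ j ∈ J i, α i j • f j) = ∑ j ∈ J i, (α i j * z j) • f j := by
    intro i
    simp only [← Matrix.mulVecLin_apply, map_sum]
    refine Finset.sum_congr rfl fun j _ => ?_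
    rw [LinearMap.map_smul, Matrix.mulVecLin_apply, hf_eig j, smul_smul]
  refine ⟨fun i => ∑ j ∈ J i, α i j • f j, ?_, ?_, ?_⟩
  · intro i j
    rw [dot_expand f (J i) (J j)]
    by_cases hij : i = j
    · subst hij
      simp only [if_pos rfl]
      rw [← Complex.ofReal_one, ← hT1 i]
      push_cast
      refine Finset.sum_congr rfl fun a ha => ?_
      simp only [hf_on, mul_ite, mul_one, mul_zero]
      rw [Finset.sum_ite_eq (J i) a, if_pos ha, hconj, hαsq]
    · rw [if_neg hij]
      refine Finset.sum_eq_zero fun a ha => Finset.sum_eq_zero fun b hb => ?_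
      rw [hf_on, if_neg, mul_zero]
      exact fun hab => (Finset.disjoint_left.mp (hdisj i j hij) ha) (hab ▸ hb)
  · intro i
    rw [hMw i, dot_expand f (J i) (J i)]
    rw [← hTc i]
    refine Finset.sum_congr rfl fun a ha => ?_
    simp only [hf_on, mul_ite, mul_one, mul_zero]
    rw [Finset.sum_ite_eq (J i) a, if_pos ha, hconj]
    rw [← mul_assoc, hαsq]
  · intro i h hih
    rw [hMw i, dot_expand f (J h) (J i)]
    refine Finset.sum_eq_zero fun a ha => Finset.sum_eq_zero fun b hb => ?_
    rw [hf_on, if_neg, mul_zero]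
    exact fun hab => (Finset.disjoint_left.mp (hdisj h i (fun e => hih e.symm)) ha) (hab ▸ hb)
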